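/- Let N ≥ 1, let S be a standard Young tableau of shape (2^N) (a Young diagram with two columns of length N), and let k ∈ {1,…,2N−2}. Then the symmetrization of the Specht polynomial P_S over the three variables x_k, x_{k+1}, x_{k+2} vanishes: Σ_{σ ∈ ⟨τ_k, τ_{k+1}⟩} σ·P_S = 0, where ⟨τ_k, τ_{k+1}⟩ ≅ S_3 is the subgroup of S_{2N} generated by the transpositions τ_k = (k, k+1) and τ_{k+1} = (k+1, k+2), acting on polynomials by permuting variables. Consequently, the action of ℂ[S_{2N}] on span_ℝ{𝓤_T : T ∈ SYT^{(N,N)}} defined by σ·𝓤_T := Δ(x)^{−1/2} (sgn(σ)σ)·P_{T^t} satisfies the Temperley–Lieb relation 1 − τ_i − τ_{i+1} + τ_iτ_{i+1} + τ_{i+1}τ_i − τ_iτ_{i+1}τ_i = 0 for all i ∈ {1,…,2N−2}, i.e., the representation descends to the Temperley–Lieb quotient of ℂ[S_{2N}]. -/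

import Mathlib

open scoped Classical
open MvPolynomial

noncomputable section

/-- The cells of the Young diagram of shape `(N, N)`: two rows of length `N`. -/
def cellsNN (N : ℕ) : Finset (ℕ × ℕ) := (Finset.range 2) ×ˢ (Finset.range N)

/-- The cells of the Young diagram of shape `(2^N)`: two columns of length `N`. -/
def cellsCol (N : ℕ) : Finset (ℕ × ℕ) := (Finset.range N) ×ˢ (Finset.range 2)

/-- Normalization off the diagram. -/
def ZeroOff (cells : Finset (ℕ × ℕ)) (F : ℕ × ℕ → ℕ) : Prop :=
  ∀ c, c ∉ cells → F c = 0

/-- Standard Young tableaux with the given cells (numberings by `1, …, n`,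
strictly increasing along rows and down columns). -/
def SYTset (n : ℕ) (cells : Finset (ℕ × ℕ)) : Set (ℕ × ℕ → ℕ) :=
  {T | Set.BijOn T ↑cells (Set.Icc 1 n) ∧
    (∀ c ∈ cells, ∀ c' ∈ cells, c.1 = c'.1 → c.2 < c'.2 → T c < T c') ∧
    (∀ c ∈ cells, ∀ c' ∈ cells, c.2 = c'.2 → c.1 < c'.1 → T c < T c') ∧
    ZeroOff cells T}

/-- The Specht polynomial of a numbering: the product over pairs of cells in the same
column of `(x_{Nb(lower)} - x_{Nb(upper)})`. -/
def spechtPoly (cells : Finset (ℕ × ℕ)) (Nb : ℕ × ℕ → ℕ) : MvPolynomial ℕ ℝ :=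
  ∏ p ∈ (cells ×ˢ cells).filter (fun p => p.1.2 = p.2.2 ∧ p.2.1 < p.1.1),
    (X (Nb p.1) - X (Nb p.2))

/-- The Specht polynomial `P_{T^t}` of the transpose of `T ∈ SYT^{(N,N)}`. -/
def spechtTransNN (N : ℕ) (T : ℕ × ℕ → ℕ) : MvPolynomial ℕ ℝ :=
  ∏ p ∈ ((cellsNN N) ×ˢ (cellsNN N)).filter (fun p => p.1.1 = p.2.1 ∧ p.2.2 < p.1.2),
    (X (T p.1) - X (T p.2))

/-- Evaluation of a polynomial in the 1-based variables `x_1, …, x_m` at `x : Fin m → ℝ`. -/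
def evalAt (m : ℕ) (x : Fin m → ℝ) : MvPolynomial ℕ ℝ → ℝ :=
  MvPolynomial.eval fun k => if h : 1 ≤ k ∧ k ≤ m then x ⟨k - 1, by omega⟩ else 0

/-- The Vandermonde product. -/
def vandProd (m : ℕ) (x : Fin m → ℝ) : ℝ :=
  ∏ p ∈ Finset.univ.filter (fun p : Fin m × Fin m => p.1 < p.2), (x p.2 - x p.1)

/-- The chamber `𝔛_m`. -/
def chamber (m : ℕ) : Set (Fin m → ℝ) := {x | StrictMono x}

/-- Extension of a permutation of `Fin n` to the 1-based letters `{1, …, n} ⊆ ℕ`. -/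
def extendPerm (n : ℕ) (σ : Equiv.Perm (Fin n)) : ℕ → ℕ :=
  fun i => if h : 1 ≤ i ∧ i ≤ n then ((σ ⟨i - 1, by omega⟩ : Fin n) : ℕ) + 1 else i

/-! Column by column, `P_S` is a product of Vandermonde determinants, so exchanging the labels of
two cells in the same column negates it. As `S` has only two columns, two of the labels
`k, k+1, k+2` share a column: some transposition `t` of `⟨τ_k, τ_{k+1}⟩ ≅ S_3` sends `P_S` to
`-P_S`, and reindexing the symmetrization by `σ ↦ σ t` shows that it equals its own negative.
The Temperley–Lieb relation is the same vanishing for `P_{T^t}`: the signs `sgn σ` of the action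
cancel those of the relation. -/

open Equiv

lemma spechtPoly_cellsCol_eq_prod_det_vandermonde (N : ℕ) (Nb : ℕ × ℕ → ℕ) :
    spechtPoly (cellsCol N) Nb =
      ∏ j : Fin 2,
        (Matrix.vandermonde fun i : Fin N => (X (Nb (i, j)) : MvPolynomial ℕ ℝ)).det := by
  simp only [Matrix.det_vandermonde, spechtPoly]
  rw [Finset.prod_sigma']
  simp only [Finset.prod_sigma']
  have mem : ∀ p : (ℕ × ℕ) × (ℕ × ℕ), p ∈ (cellsCol N ×ˢ cellsCol N).filter
      (fun p => p.1.2 = p.2.2 ∧ p.2.1 < p.1.1) ↔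
      p.1.1 < N ∧ p.1.2 < 2 ∧ p.2.1 < N ∧ p.2.2 < 2 ∧ p.1.2 = p.2.2 ∧ p.2.1 < p.1.1 := by
    simp [cellsCol, and_assoc]
  refine (Finset.prod_bij' (fun x _ => ((↑x.2, ↑x.1.1), (↑x.1.2, ↑x.1.1)))
    (fun p hp => ⟨⟨⟨p.1.2, ((mem p).1 hp).2.1⟩, ⟨p.2.1, ((mem p).1 hp).2.2.1⟩⟩,
      ⟨p.1.1, ((mem p).1 hp).1⟩⟩) ?_ ?_ ?_ ?_ ?_).symm
  · rintro ⟨⟨j, i⟩, i'⟩ h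
    simp only [Finset.mem_sigma, Finset.mem_univ, Finset.mem_Ioi, true_and] at h
    simp only [mem, Fin.is_lt, true_and]
    exact h
  · intro p hp
    simp only [Finset.mem_sigma, Finset.mem_univ, Finset.mem_Ioi, true_and, Fin.lt_def]
    exact ((mem p).1 hp).2.2.2.2.2
  · rintro ⟨⟨j, i⟩, i'⟩ h
    rfl
  · rintro ⟨⟨i', j⟩, i, j'⟩ h
    obtain ⟨-, -, -, -, hj, -⟩ := (mem _).1 h
    simp only at hj
    simp [hj]
  · intros; rfl

lemma map_det_vandermonde {R S : Type*} [CommRing R] [CommRing S] (φ : R →+* S) {n : ℕ}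
    (v : Fin n → R) : φ (Matrix.vandermonde v).det = (Matrix.vandermonde (φ ∘ v)).det := by
  rw [RingHom.map_det]
  congr 1
  ext
  simp [Matrix.vandermonde_apply]

lemma det_vandermonde_comp_swap {R : Type*} [CommRing R] {n : ℕ} (v : Fin n → R) {r s : Fin n}
    (hrs : r ≠ s) : (Matrix.vandermonde (v ∘ swap r s)).det = -(Matrix.vandermonde v).det := by
  rw [show Matrix.vandermonde (v ∘ swap r s) = (Matrix.vandermonde v).submatrix (swap r s) id
    from rfl, Matrix.det_permute, Perm.sign_swap hrs]
  simp

lemma rename_swap_spechtPoly_cellsCol {N : ℕ} {Nb : ℕ × ℕ → ℕ}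
    (hNb : Set.InjOn Nb (cellsCol N)) (r s : Fin N) (hrs : r ≠ s) (j : Fin 2) :
    rename (swap (Nb (r, j)) (Nb (s, j))) (spechtPoly (cellsCol N) Nb)
      = -spechtPoly (cellsCol N) Nb := by
  have mem : ∀ (i : Fin N) (j : Fin 2), ((i : ℕ), (j : ℕ)) ∈ cellsCol N := by
    intro i j
    exact Finset.mem_product.2 ⟨Finset.mem_range.2 i.isLt, Finset.mem_range.2 j.isLt⟩
  have hcol : ∀ j : Fin 2, Function.Injective fun i : Fin N => Nb (i, j) := by
    intro j i i' h
    simpa [Fin.ext_iff] using hNb (mem i j) (mem i' j) h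
  set φ := (rename (R := ℝ) (swap (Nb (r, j)) (Nb (s, j)))).toRingHom
  have hj : φ ∘ (fun i : Fin N => X (Nb (i, j))) = (fun i : Fin N => X (Nb (i, j))) ∘ swap r s := by
    ext1 i
    simp [φ, (hcol j).swap_apply]
  have hj' : ∀ j' ≠ j,
      φ ∘ (fun i : Fin N => X (Nb (i, j'))) = (fun i : Fin N => X (Nb (i, j'))) := by
    intro j' hj'
    ext1 i
    have h1 : Nb (i, j') ≠ Nb (r, j) := fun h =>
      hj' (Fin.ext (congrArg Prod.snd (hNb (mem _ _) (mem _ _) h)))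
    have h2 : Nb (i, j') ≠ Nb (s, j) := fun h =>
      hj' (Fin.ext (congrArg Prod.snd (hNb (mem _ _) (mem _ _) h)))
    simp [φ, swap_apply_of_ne_of_ne h1 h2]
  change φ _ = _
  rw [spechtPoly_cellsCol_eq_prod_det_vandermonde, map_prod, Fintype.prod_eq_mul_prod_compl j,
    Fintype.prod_eq_mul_prod_compl j, map_det_vandermonde, hj, det_vandermonde_comp_swap _ hrs,
    neg_mul]
  congr 2
  refine Finset.prod_congr rfl fun j' hj'' => ?_
  rw [map_det_vandermonde, hj' j' (by simpa using hj'')]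

lemma exists_rename_swap_spechtPoly_cellsCol_eq_neg {N : ℕ} {S : ℕ × ℕ → ℕ}
    (hS : Set.InjOn S (cellsCol N)) (k : ℕ) (hk : ∀ i : Fin 3, k + i ∈ S '' cellsCol N) :
    ∃ i i' : Fin 3, i ≠ i' ∧
      rename (swap (k + i) (k + i')) (spechtPoly (cellsCol N) S) = -spechtPoly (cellsCol N) S := by
  choose c hc hSc using hk
  have hbound : ∀ i, (c i).1 < N ∧ (c i).2 < 2 := fun i => by simpa [cellsCol] using hc i
  obtain ⟨i, i', hii', hcol⟩ := Fintype.exists_ne_map_eq_of_card_lt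
    (fun i => (⟨(c i).2, (hbound i).2⟩ : Fin 2)) (by simp)
  have hrow : (c i).1 ≠ (c i').1 := by
    intro h
    apply hii'
    have := congrArg S (Prod.ext h (congrArg Fin.val hcol))
    rw [hSc, hSc] at this
    exact Fin.ext (by omega)
  refine ⟨i, i', hii', ?_⟩
  have := rename_swap_spechtPoly_cellsCol hS ⟨_, (hbound i).1⟩ ⟨_, (hbound i').1⟩
    (by simpa [Fin.ext_iff] using hrow) ⟨_, (hbound i).2⟩
  have e : ((c i').1, (c i).2) = c i' := Prod.ext rfl (congrArg Fin.val hcol)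
  simpa only [Fin.val_mk, Prod.mk.eta, e, hSc] using this

lemma sum_eq_zero_of_mul_right_eq_neg {G M : Type*} [Group G] [Fintype G] [AddCommGroup M]
    [IsAddTorsionFree M] {f : G → M} (t : G) (hf : ∀ σ, f (σ * t) = -f σ) : ∑ σ, f σ = 0 := by
  rw [← self_eq_neg, ← Finset.sum_neg_distrib]
  exact Fintype.sum_equiv (Equiv.mulRight t) _ _ fun σ => by rw [coe_mulRight, hf, neg_neg]

lemma Equiv.Perm.viaEmbedding_swap {α β : Type*} [DecidableEq α] [DecidableEq β] (e : α ↪ β)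
    (a b : α) : (swap a b).viaEmbedding e = swap (e a) (e b) := by
  ext x
  by_cases hx : x ∈ Set.range e
  · obtain ⟨y, rfl⟩ := hx
    rw [Perm.viaEmbedding_apply, e.swap_apply]
  · rw [Perm.viaEmbedding_apply_of_notMem _ _ _ hx, swap_apply_of_ne_of_ne] <;>
      rintro rfl <;> exact hx ⟨_, rfl⟩

def permShift (n k : ℕ) : Perm (Fin n) →* Perm ℕ :=
  Perm.viaEmbeddingHom (Fin.valEmbedding.trans (addLeftEmbedding k))

lemma permShift_injective (n k : ℕ) : Function.Injective (permShift n k) :=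
  Perm.viaEmbeddingHom_injective _

lemma permShift_apply_add (n k : ℕ) (σ : Perm (Fin n)) (i : Fin n) :
    permShift n k σ (k + i) = k + σ i :=
  Perm.viaEmbedding_apply σ _ i

lemma permShift_apply_of_notMem (n k : ℕ) (σ : Perm (Fin n)) {m : ℕ}
    (hm : m ∉ Set.Ico k (k + n)) : permShift n k σ m = m := by
  refine Perm.viaEmbedding_apply_of_notMem _ _ _ ?_
  rintro ⟨i, rfl⟩
  exact hm ⟨Nat.le_add_right _ _, by simp⟩

lemma permShift_swap (n k : ℕ) (i i' : Fin n) :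
    permShift n k (swap i i') = swap (k + i) (k + i') := by
  rw [permShift, Perm.viaEmbeddingHom_apply, Perm.viaEmbedding_swap]
  rfl

lemma closure_swap_swap_eq_range_permShift (k : ℕ) :
    Subgroup.closure ({swap k (k + 1), swap (k + 1) (k + 2)} : Set (Perm ℕ))
      = (permShift 3 k).range := by
  have hgen : ({swap k (k + 1), swap (k + 1) (k + 2)} : Set (Perm ℕ))
      = permShift 3 k '' Set.range fun i : Fin 2 => swap i.castSucc i.succ := by
    rw [← Set.range_comp]
    ext σ
    simp [Fin.exists_fin_two, permShift_swap, eq_comm]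
  rw [hgen, ← MonoidHom.map_closure,
    Subgroup.closure_eq_top_of_mclosure_eq_top (Perm.mclosure_swap_castSucc_succ 2),
    MonoidHom.range_eq_map]

lemma sum_rename_permShift_eq_zero {R : Type*} [CommRing R] [IsDomain R] [CharZero R]
    {n k : ℕ} (P : MvPolynomial ℕ R) {i i' : Fin n} (h : rename (swap (k + i) (k + i')) P = -P) :
    ∑ τ, rename (permShift n k τ) P = 0 :=
  sum_eq_zero_of_mul_right_eq_neg (swap i i') fun σ => by
    rw [map_mul, Perm.coe_mul, ← rename_rename, permShift_swap, h, map_neg]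

lemma sum_perm_fin_three {M : Type*} [AddCommMonoid M] (f : Perm (Fin 3) → M) :
    ∑ τ, f τ = f 1 + f (swap 0 1) + f (swap 1 2) + f (swap 0 1 * swap 1 2)
      + f (swap 1 2 * swap 0 1) + f (swap 0 1 * swap 1 2 * swap 0 1) := by
  rw [show (Finset.univ : Finset (Perm (Fin 3))) = {1, swap 0 1, swap 1 2, swap 0 1 * swap 1 2,
    swap 1 2 * swap 0 1, swap 0 1 * swap 1 2 * swap 0 1} by decide]
  repeat rw [Finset.sum_insert (by decide)]
  rw [Finset.sum_singleton]
  abel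

lemma sum_rename_permShift_spechtPoly_cellsCol_eq_zero {N n k : ℕ} {S : ℕ × ℕ → ℕ}
    (hS : Set.BijOn S (cellsCol N) (Set.Icc 1 n)) (hk1 : 1 ≤ k) (hk : k + 2 ≤ n) :
    ∑ τ, rename (permShift 3 k τ) (spechtPoly (cellsCol N) S) = 0 := by
  obtain ⟨i, i', -, h⟩ := exists_rename_swap_spechtPoly_cellsCol_eq_neg hS.injOn k
    fun i => hS.surjOn ⟨by omega, by omega⟩
  exact sum_rename_permShift_eq_zero _ h

lemma extendPerm_eq_permShift (n : ℕ) (σ : Perm (Fin n)) : extendPerm n σ = permShift n 1 σ := by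
  funext m
  by_cases h : 1 ≤ m ∧ m ≤ n
  · obtain ⟨i, rfl⟩ : ∃ i : Fin n, 1 + (i : ℕ) = m := ⟨⟨m - 1, by omega⟩, by dsimp only; omega⟩
    rw [permShift_apply_add]
    simp [extendPerm, add_comm]
  · rw [extendPerm, dif_neg h, permShift_apply_of_notMem]
    simp only [Set.mem_Ico]
    omega

lemma spechtTransNN_eq_spechtPoly_cellsCol (N : ℕ) (T : ℕ × ℕ → ℕ) :
    spechtTransNN N T = spechtPoly (cellsCol N) (T ∘ Prod.swap) := by
  refine Finset.prod_nbij' (Prod.map Prod.swap Prod.swap) (Prod.map Prod.swap Prod.swap)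
    ?_ ?_ (fun _ _ => rfl) (fun _ _ => rfl) (fun _ _ => rfl) <;>
  · intro p hp
    simp only [Finset.mem_filter, Finset.mem_product, cellsNN, cellsCol,
      Finset.mem_range, Prod.map_fst, Prod.map_snd, Prod.fst_swap, Prod.snd_swap] at hp ⊢
    tauto

lemma bijOn_comp_swap_cellsCol {N : ℕ} {T : ℕ × ℕ → ℕ} {s : Set ℕ}
    (hT : Set.BijOn T (cellsNN N) s) : Set.BijOn (T ∘ Prod.swap) (cellsCol N) s := by
  refine hT.comp ?_
  have : (cellsNN N : Set (ℕ × ℕ)) = Prod.swap '' (cellsCol N) := by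
    simp [cellsNN, cellsCol, Set.image_swap_prod]
  exact this ▸ Prod.swap_injective.injOn.bijOn_image

/-- For a standard Young tableau `S` of shape `(2^N)` and
`k ∈ {1, …, 2N-2}`, the symmetrization of the Specht polynomial `P_S` over the variables
`x_k, x_{k+1}, x_{k+2}` vanishes; consequently, the `ℂ[S_{2N}]`-action
`σ · 𝓤_T := Δ(x)^{-1/2} (sgn σ) σ · P_{T^t}` on the span of the conformal block functions
satisfies the Temperley–Lieb relation
`1 - τ_i - τ_{i+1} + τ_i τ_{i+1} + τ_{i+1} τ_i - τ_i τ_{i+1} τ_i = 0`. -/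
theorem specht_symmetrization_and_TL_relation
    (N : ℕ) (k : ℕ) (hk1 : 1 ≤ k) (hk2 : k ≤ 2 * N - 2)
    (S : ℕ × ℕ → ℕ) (hS : S ∈ SYTset (2 * N) (cellsCol N)) :
    (∑ᶠ σ ∈ ((Subgroup.closure
        ({Equiv.swap k (k + 1), Equiv.swap (k + 1) (k + 2)} :
          Set (Equiv.Perm ℕ))) : Set (Equiv.Perm ℕ)),
        MvPolynomial.rename (⇑σ) (spechtPoly (cellsCol N) S)) = 0 ∧
    (∀ T ∈ SYTset (2 * N) (cellsNN N), ∀ x ∈ chamber (2 * N),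
      let t1 : Equiv.Perm (Fin (2 * N)) := Equiv.swap ⟨k - 1, by omega⟩ ⟨k, by omega⟩
      let t2 : Equiv.Perm (Fin (2 * N)) := Equiv.swap ⟨k, by omega⟩ ⟨k + 1, by omega⟩
      let g : Equiv.Perm (Fin (2 * N)) → ℝ := fun σ =>
        ((Equiv.Perm.sign σ : ℤ) : ℝ) *
          evalAt (2 * N) x (MvPolynomial.rename (extendPerm (2 * N) σ) (spechtTransNN N T)) /
          Real.sqrt (vandProd (2 * N) x)
      g 1 - g t1 - g t2 + g (t1 * t2) + g (t2 * t1) - g (t1 * t2 * t1) = 0) := by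
  have hk : k + 2 ≤ 2 * N := by omega
  refine ⟨?_, fun T hT x hx => ?_⟩
  · rw [closure_swap_swap_eq_range_permShift, MonoidHom.coe_range,
      finsum_mem_range (permShift_injective 3 k), finsum_eq_sum_of_fintype]
    exact sum_rename_permShift_spechtPoly_cellsCol_eq_zero hS.1 hk1 hk
  · intro t1 t2 g
    have hsum := sum_rename_permShift_spechtPoly_cellsCol_eq_zero
      (bijOn_comp_swap_cellsCol hT.1) hk1 hk
    rw [sum_perm_fin_three] at hsum
    simp only [map_one, map_mul, permShift_swap, Fin.val_zero, Fin.val_one, Fin.val_two,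
      add_zero] at hsum
    have h1 : permShift (2 * N) 1 t1 = swap k (k + 1) := by
      rw [permShift_swap]; congr 1 <;> dsimp only <;> omega
    have h2 : permShift (2 * N) 1 t2 = swap (k + 1) (k + 2) := by
      rw [permShift_swap]; congr 1 <;> dsimp only <;> omega
    have s1 : Perm.sign t1 = -1 := Perm.sign_swap (by simp only [ne_eq, Fin.mk.injEq]; omega)
    have s2 : Perm.sign t2 = -1 := Perm.sign_swap (by simp only [ne_eq, Fin.mk.injEq]; omega)
    have hval := congrArg (evalAt (2 * N) x) hsum
    simp only [evalAt, map_add, map_zero] at hval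
    simp only [g, extendPerm_eq_permShift, map_one, map_mul, h1, h2, s1, s2, evalAt,
      ← spechtTransNN_eq_spechtPoly_cellsCol, Units.val_neg, Units.val_one, Int.cast_neg,
      Int.cast_one, neg_mul, one_mul, neg_neg] at hval ⊢
    linear_combination hval / √(vandProd (2 * N) x)
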